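/- arXiv:0810.0097 — 2 statements merged into one kernel-verified Lean document; each statement's English description precedes it below -/
import Mathlib

section
/- Let a > 0 and b > a+1 be reals. Then for every integer k ≥ 1, the sum I(a,b,k) = ∑_{t=1}^∞ t^a/(t+k)^b is finite, and there exists a constant C = C(a,b) such that I(a,b,k) ≤ C·k^{1+a−b} for all k ≥ 1. -/
/-!
Since `t ^ a ≤ (t + k) ^ a`, the `t`-th term is at most `(t + k) ^ (a - b)`, so `I(a,b,k)` is
dominated by a tail of the `p`-series with `p = a - b < -1`. By the integral test that tail is at
most `∫_k^∞ x ^ (a - b) dx = k ^ (1 + a - b) / (b - a - 1)`.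
-/

lemma Real.rpow_div_rpow_le_rpow_sub {x y a b : ℝ} (hx : 0 ≤ x) (hxy : x ≤ y) (hy : 0 < y)
    (ha : 0 ≤ a) : x ^ a / y ^ b ≤ y ^ (a - b) := by
  rw [Real.rpow_sub hy]
  gcongr

lemma Real.tsum_rpow_nat_add_le {p : ℝ} (hp : p < -1) {N : ℕ} (hN : 0 < N) :
    ∑' n : ℕ, ((n + N + 1 : ℕ) : ℝ) ^ p ≤ -(N : ℝ) ^ (p + 1) / (p + 1) := by
  have hN' : (0 : ℝ) < N := by exact_mod_cast hN
  rw [← integral_Ioi_rpow_of_lt hp hN']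
  refine AntitoneOn.tsum_comp_add_le_integral N ?_ (integrableOn_Ioi_rpow_of_lt hp hN') ?_
  · intro x hx y _ hxy
    exact Real.rpow_le_rpow_of_nonpos (hN'.trans_le hx) hxy (by linarith)
  · intro t ht
    exact Real.rpow_nonneg (hN'.trans ht).le p

/-- For `a > 0` and `b > a + 1`, the series `I(a,b,k) = ∑_{t=1}^∞ t^a/(t+k)^b` converges
for every integer `k ≥ 1`, and there is a constant `C = C(a,b)` with
`I(a,b,k) ≤ C k^(1+a-b)` for all `k ≥ 1`. -/
theorem sum_pow_div_pow_le (a b : ℝ) (ha : 0 < a) (hb : a + 1 < b) :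
    ∃ C : ℝ, 0 < C ∧ ∀ k : ℕ, 1 ≤ k →
      Summable (fun t : ℕ => ((t : ℝ) + 1) ^ a / (((t : ℝ) + 1) + (k : ℝ)) ^ b) ∧
      (∑' t : ℕ, ((t : ℝ) + 1) ^ a / (((t : ℝ) + 1) + (k : ℝ)) ^ b) ≤
        C * (k : ℝ) ^ (1 + a - b) := by
  have hp : a - b < -1 := by linarith
  refine ⟨(b - a - 1)⁻¹, inv_pos.mpr (by linarith), fun k hk ↦ ?_⟩
  have hterm (t : ℕ) : ((t : ℝ) + 1) ^ a / (((t : ℝ) + 1) + (k : ℝ)) ^ b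
      ≤ ((t + k + 1 : ℕ) : ℝ) ^ (a - b) := by
    rw [show ((t + k + 1 : ℕ) : ℝ) = (t + 1) + k by push_cast; ring]
    exact Real.rpow_div_rpow_le_rpow_sub (by positivity) (by simp) (by positivity) ha.le
  have htail : Summable fun t : ℕ ↦ ((t + k + 1 : ℕ) : ℝ) ^ (a - b) :=
    (summable_nat_add_iff (k + 1)).mpr (Real.summable_nat_rpow.mpr hp)
  have hsum := htail.of_nonneg_of_le (fun t ↦ by positivity) hterm
  refine ⟨hsum, ?_⟩
  calc ∑' t : ℕ, ((t : ℝ) + 1) ^ a / (((t : ℝ) + 1) + (k : ℝ)) ^ b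
      ≤ ∑' t : ℕ, ((t + k + 1 : ℕ) : ℝ) ^ (a - b) := hsum.tsum_le_tsum hterm htail
    _ ≤ -(k : ℝ) ^ (a - b + 1) / (a - b + 1) := Real.tsum_rpow_nat_add_le hp hk
    _ = (b - a - 1)⁻¹ * (k : ℝ) ^ (1 + a - b) := by
      rw [show a - b + 1 = -(b - a - 1) by ring, show 1 + a - b = -(b - a - 1) by ring,
        div_neg, neg_div, neg_neg, div_eq_inv_mul]
end

section
/- Let (Δ_i)_{i∈ℤ} be a finite martingale difference sequence adapted to a filtration, with f − E[f] = ∑_i Δ_i and f ∈ L^{2p} for an integer p ≥ 1. If there exist nonnegative random variables Ψ_i and a nonnegative summable sequence (c_i) with Δ_i² ≤ Ψ_i²·c_i almost surely and the (Ψ_i) identically distributed with E[Ψ_0^{2p}] < ∞, then E[(f − E f)^{2p}] ≤ (2p−1)^{2p}·E[Ψ_0^{2p}]·(∑_i c_i)^p. -/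
/-!
Write `‖·‖` for the `L^{2m}` norm. If `X` is `𝓖`-measurable and `E[d | 𝓖] = 0`, expand
`E[(X + d)^{2m}]` binomially: the term `2m E[X^{2m-1} d]` vanishes, and Hölder bounds every other
term `E[X^k d^{2m-k}]` by `‖X‖^k ‖d‖^{2m-k}`. Hence `‖X + d‖^{2m} ≤ (a + b)^{2m} - 2m a^{2m-1} b`
with `a = ‖X‖`, `b = ‖d‖`, and an elementary inequality bounds this by `(a² + (2m-1)² b²)^m`.
Adding the martingale differences one at a time gives `‖∑ Δᵢ‖² ≤ (2m-1)² ∑ ‖Δᵢ‖²`, while the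
domination `Δᵢ² ≤ Ψᵢ² cᵢ` and identical distribution give `‖Δᵢ‖² ≤ cᵢ ‖Ψ₀‖²`.
-/

open MeasureTheory Finset
open scoped ENNReal

theorem one_sub_mul_mul_one_add_pow_le (n : ℕ) {t : ℝ} (ht : -1 ≤ t) :
    (1 - n * t) * (1 + t) ^ n ≤ 1 := by
  rcases le_total (1 - n * t) 0 with hneg | hpos
  · exact (mul_nonpos_of_nonpos_of_nonneg hneg (pow_nonneg (by linarith) n)).trans zero_le_one
  calc (1 - n * t) * (1 + t) ^ n ≤ Real.exp (-(n * t)) * Real.exp t ^ n :=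
        mul_le_mul (by linarith [Real.add_one_le_exp (-(n * t))])
          (pow_le_pow_left₀ (by linarith) (by linarith [Real.add_one_le_exp t]) n)
          (pow_nonneg (by linarith) n) (Real.exp_nonneg _)
    _ = 1 := by rw [← Real.exp_nat_mul, ← Real.exp_add]; simp

theorem one_add_pow_two_mul_le (m : ℕ) {t : ℝ} (ht : 0 ≤ t) :
    (1 + t) ^ (2 * m) ≤ (1 + (2 * m - 1) ^ 2 * t ^ 2) ^ m + 2 * m * t := by
  obtain _ | k := m
  · simp
  push_cast
  rw [pow_mul]
  set x := (1 + t) ^ 2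
  set y := 1 + (2 * (k + 1 : ℝ) - 1) ^ 2 * t ^ 2
  have hy : 0 ≤ y := by positivity
  rcases le_total x y with hxy | hyx
  · exact le_add_of_le_of_nonneg (pow_le_pow_left₀ (by positivity) hxy _) (by positivity)
  have hmvt : x ^ (k + 1) - y ^ (k + 1) ≤ (x - y) * (k + 1) * x ^ k := by
    have := abs_pow_sub_pow_le x y (k + 1)
    rwa [abs_of_nonneg (sub_nonneg.2 (pow_le_pow_left₀ hy hyx _)),
      abs_of_nonneg (sub_nonneg.2 hyx), abs_of_nonneg hy, abs_of_nonneg (hy.trans hyx),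
      max_eq_left hyx, Nat.add_sub_cancel, Nat.cast_succ] at this
  have hkey : (1 - 2 * k * (k + 1) * t) * x ^ k ≤ 1 :=
    calc (1 - 2 * k * (k + 1) * t) * x ^ k ≤ (1 - (2 * k : ℕ) * t) * (1 + t) ^ (2 * k) := by
          rw [pow_mul]
          gcongr
          push_cast
          nlinarith [k.cast_nonneg (α := ℝ)]
      _ ≤ 1 := one_sub_mul_mul_one_add_pow_le _ (by linarith)
  have hdiff : x - y = 2 * t * (1 - 2 * k * (k + 1) * t) := by ring
  rw [hdiff] at hmvt
  nlinarith [mul_le_mul_of_nonneg_left hkey (by positivity : (0 : ℝ) ≤ 2 * t * (k + 1))]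

theorem add_pow_two_mul_le (m : ℕ) {a b : ℝ} (ha : 0 ≤ a) (hb : 0 ≤ b) :
    (a + b) ^ (2 * m) ≤ (a ^ 2 + (2 * m - 1) ^ 2 * b ^ 2) ^ m + 2 * m * a ^ (2 * m - 1) * b := by
  obtain _ | k := m
  · simp
  set c : ℝ := (2 * (k + 1 : ℕ) - 1) ^ 2
  rcases ha.eq_or_lt with rfl | ha
  · have hc : 1 ≤ c := one_le_pow₀ (by push_cast; linarith [k.cast_nonneg (α := ℝ)])
    refine le_add_of_le_of_nonneg ?_ (by positivity)
    rw [zero_add, pow_mul, zero_pow two_ne_zero, zero_add]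
    exact pow_le_pow_left₀ (sq_nonneg b) (le_mul_of_one_le_left (sq_nonneg b) hc) (k + 1)
  calc (a + b) ^ (2 * (k + 1)) = a ^ (2 * (k + 1)) * (1 + b / a) ^ (2 * (k + 1)) := by
        rw [← mul_pow]; field_simp
    _ ≤ a ^ (2 * (k + 1)) * ((1 + c * (b / a) ^ 2) ^ (k + 1) + 2 * (k + 1 : ℕ) * (b / a)) :=
        mul_le_mul_of_nonneg_left (one_add_pow_two_mul_le (k + 1) (div_nonneg hb ha.le))
          (by positivity)
    _ = (a ^ 2 * (1 + c * (b / a) ^ 2)) ^ (k + 1) +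
          a ^ (2 * (k + 1)) * (2 * (k + 1 : ℕ) * (b / a)) := by
        rw [mul_add, pow_mul, ← mul_pow]
    _ = _ := by
        rw [show 2 * (k + 1) - 1 = 2 * k + 1 by omega]
        congr 1
        · field_simp
        · field_simp
          ring

namespace MeasureTheory

variable {Ω : Type*} {m0 : MeasurableSpace Ω} {μ : Measure Ω}

theorem MemLp.integral_norm_pow_eq {E : Type*} [NormedAddCommGroup E] {X : Ω → E} {n : ℕ}
    (hn : n ≠ 0) (hX : MemLp X n μ) : ∫ ω, ‖X ω‖ ^ n ∂μ = (eLpNorm X n μ).toReal ^ n := by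
  rw [hX.eLpNorm_eq_integral_rpow_norm (by simpa) (by simp), ENNReal.toReal_ofReal
    (by positivity)]
  simp only [ENNReal.toReal_natCast, Real.rpow_natCast]
  rw [Real.rpow_inv_natCast_pow (integral_nonneg fun _ => by positivity) hn]

theorem MemLp.integral_pow_two_mul_eq {X : Ω → ℝ} {m : ℕ} (hm : m ≠ 0)
    (hX : MemLp X (2 * m : ℕ) μ) :
    ∫ ω, X ω ^ (2 * m) ∂μ = ((eLpNorm X (2 * m : ℕ) μ).toReal ^ 2) ^ m := by
  rw [← pow_mul, ← hX.integral_norm_pow_eq (by omega)]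
  simp [Real.norm_eq_abs, (even_two_mul m).pow_abs]

theorem memLp_of_integrable_norm_pow {E : Type*} [NormedAddCommGroup E] {f : Ω → E} {n : ℕ}
    (hn : n ≠ 0) (hf : AEStronglyMeasurable f μ) (h : Integrable (fun ω => ‖f ω‖ ^ n) μ) :
    MemLp f n μ :=
  (integrable_norm_rpow_iff hf (by simpa) (by simp)).1 (by simpa using h)

theorem toReal_eLpNorm_le_mul_of_ae_le_mul {E F : Type*} [NormedAddCommGroup E]
    [NormedAddCommGroup F] {f : Ω → E} {g : Ω → F} {c : ℝ} {p : ℝ≥0∞} (hc : 0 ≤ c)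
    (hg : MemLp g p μ) (h : ∀ᵐ ω ∂μ, ‖f ω‖ ≤ c * ‖g ω‖) :
    (eLpNorm f p μ).toReal ≤ c * (eLpNorm g p μ).toReal := by
  have := ENNReal.toReal_mono (by finiteness [hg.eLpNorm_lt_top])
    (eLpNorm_le_mul_eLpNorm_of_ae_le_mul h p)
  rwa [ENNReal.toReal_mul, ENNReal.toReal_ofReal hc] at this

theorem ae_norm_le_sqrt_mul_norm_of_sq_le {X Y : Ω → ℝ} {c : ℝ} (hc : 0 ≤ c)
    (h : ∀ᵐ ω ∂μ, X ω ^ 2 ≤ Y ω ^ 2 * c) : ∀ᵐ ω ∂μ, ‖X ω‖ ≤ √c * ‖Y ω‖ :=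
  h.mono fun ω hω => by
    rw [Real.norm_eq_abs, Real.norm_eq_abs, mul_comm, ← Real.sqrt_sq_eq_abs (Y ω),
      ← Real.sqrt_mul' _ hc]
    exact Real.abs_le_sqrt hω

theorem toReal_eLpNorm_sq_le_mul_of_sq_le {X Y : Ω → ℝ} {c : ℝ} {p : ℝ≥0∞} (hc : 0 ≤ c)
    (hY : MemLp Y p μ) (h : ∀ᵐ ω ∂μ, X ω ^ 2 ≤ Y ω ^ 2 * c) :
    (eLpNorm X p μ).toReal ^ 2 ≤ (eLpNorm Y p μ).toReal ^ 2 * c := by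
  have := toReal_eLpNorm_le_mul_of_ae_le_mul (Real.sqrt_nonneg c) hY
    (ae_norm_le_sqrt_mul_norm_of_sq_le hc h)
  calc (eLpNorm X p μ).toReal ^ 2 ≤ (√c * (eLpNorm Y p μ).toReal) ^ 2 :=
        pow_le_pow_left₀ ENNReal.toReal_nonneg this 2
    _ = (eLpNorm Y p μ).toReal ^ 2 * c := by rw [mul_pow, Real.sq_sqrt hc, mul_comm]

theorem lintegral_enorm_pow_mul_enorm_pow_le {E F : Type*} [NormedAddCommGroup E]
    [NormedAddCommGroup F] {X : Ω → E} {Y : Ω → F} {n k l : ℕ} (hn : n ≠ 0) (hkl : k + l = n)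
    (hX : AEStronglyMeasurable X μ) (hY : AEStronglyMeasurable Y μ) :
    ∫⁻ ω, ‖X ω‖ₑ ^ k * ‖Y ω‖ₑ ^ l ∂μ ≤ eLpNorm X n μ ^ k * eLpNorm Y n μ ^ l := by
  have hn' : (n : ℝ) ≠ 0 := by exact_mod_cast hn
  have hpow : ∀ (x : ℝ≥0∞) (j : ℕ), (x ^ (n : ℝ)) ^ ((j : ℝ) / n) = x ^ j := fun x j => by
    rw [← ENNReal.rpow_mul, mul_div_cancel₀ _ hn', ENNReal.rpow_natCast]
  have hroot : ∀ (x : ℝ≥0∞) (j : ℕ), x ^ ((j : ℝ) / n) = (x ^ (1 / (n : ℝ))) ^ j := fun x j => by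
    rw [← ENNReal.rpow_natCast, ← ENNReal.rpow_mul, one_div_mul_eq_div]
  have := ENNReal.lintegral_mul_norm_pow_le (μ := μ)
    (hX.enorm.pow_const (n : ℝ)) (hY.enorm.pow_const (n : ℝ))
    (p := (k : ℝ) / n) (q := (l : ℝ) / n) (by positivity) (by positivity)
    (by rw [← add_div, ← Nat.cast_add, hkl, div_self hn'])
  simpa only [hpow, hroot, ENNReal.toReal_natCast,
    eLpNorm_eq_lintegral_rpow_enorm_toReal (Nat.cast_ne_zero.2 hn) (ENNReal.natCast_ne_top n)]
    using this

theorem integral_norm_pow_mul_norm_pow_le {E F : Type*} [NormedAddCommGroup E]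
    [NormedAddCommGroup F] {X : Ω → E} {Y : Ω → F} {n k l : ℕ} (hn : n ≠ 0) (hkl : k + l = n)
    (hX : MemLp X n μ) (hY : MemLp Y n μ) :
    ∫ ω, ‖X ω‖ ^ k * ‖Y ω‖ ^ l ∂μ ≤
      (eLpNorm X n μ).toReal ^ k * (eLpNorm Y n μ).toReal ^ l := by
  rw [integral_eq_lintegral_of_nonneg_ae (f := fun ω => ‖X ω‖ ^ k * ‖Y ω‖ ^ l)
    (ae_of_all _ fun _ => by positivity) (by exact (hX.1.norm.pow k).mul (hY.1.norm.pow l)),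
    ← ENNReal.toReal_pow, ← ENNReal.toReal_pow, ← ENNReal.toReal_mul]
  refine ENNReal.toReal_mono (by finiteness [hX.eLpNorm_lt_top, hY.eLpNorm_lt_top]) ?_
  refine le_of_eq_of_le (lintegral_congr fun ω => ?_)
    (lintegral_enorm_pow_mul_enorm_pow_le hn hkl hX.1 hY.1)
  rw [ENNReal.ofReal_mul (by positivity), ENNReal.ofReal_pow (norm_nonneg _),
    ENNReal.ofReal_pow (norm_nonneg _), ofReal_norm, ofReal_norm]

theorem MemLp.integrable_pow_mul_pow {X Y : Ω → ℝ} {n k l : ℕ} (hn : n ≠ 0) (hkl : k + l = n)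
    (hX : MemLp X n μ) (hY : MemLp Y n μ) :
    Integrable (fun ω => X ω ^ k * Y ω ^ l) μ := by
  refine ⟨(hX.1.pow k).mul (hY.1.pow l), ?_⟩
  rw [hasFiniteIntegral_iff_enorm]
  simp only [enorm_mul, enorm_pow]
  exact (lintegral_enorm_pow_mul_enorm_pow_le hn hkl hX.1 hY.1).trans_lt
    (by finiteness [hX.eLpNorm_lt_top, hY.eLpNorm_lt_top])

theorem integral_mul_eq_zero_of_condExp_eq_zero [IsFiniteMeasure μ] {𝓖 : MeasurableSpace Ω}
    (h𝓖 : 𝓖 ≤ m0) {Y d : Ω → ℝ} (hY : StronglyMeasurable[𝓖] Y)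
    (hYd : Integrable (fun ω => Y ω * d ω) μ) (hd : Integrable d μ) (hcond : μ[d|𝓖] =ᵐ[μ] 0) :
    ∫ ω, Y ω * d ω ∂μ = 0 := by
  calc ∫ ω, Y ω * d ω ∂μ = ∫ ω, (μ[Y * d|𝓖]) ω ∂μ := (integral_condExp h𝓖).symm
    _ = ∫ ω, (Y * μ[d|𝓖]) ω ∂μ :=
      integral_congr_ae (condExp_mul_of_stronglyMeasurable_left hY hYd hd)
    _ = ∫ ω, (0 : Ω → ℝ) ω ∂μ := integral_congr_ae (hcond.mono fun ω hω => by simp [hω])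
    _ = 0 := by simp

theorem integral_add_pow_le_of_orthogonal {X d : Ω → ℝ} {n : ℕ} (hn : n ≠ 0) (hX : MemLp X n μ)
    (hd : MemLp d n μ) (horth : ∫ ω, X ω ^ (n - 1) * d ω ∂μ = 0) :
    ∫ ω, (X ω + d ω) ^ n ∂μ ≤ ((eLpNorm X n μ).toReal + (eLpNorm d n μ).toReal) ^ n -
      n * (eLpNorm X n μ).toReal ^ (n - 1) * (eLpNorm d n μ).toReal := by
  set a := (eLpNorm X n μ).toReal
  set b := (eLpNorm d n μ).toReal
  have hcross : ∀ k ∈ range (n + 1), Integrable (fun ω => X ω ^ k * d ω ^ (n - k)) μ :=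
    fun k hk => hX.integrable_pow_mul_pow hn (by simp at hk; omega) hd
  have hmoment : ∀ k ∈ range (n + 1), ∫ ω, X ω ^ k * d ω ^ (n - k) ∂μ ≤ a ^ k * b ^ (n - k) := by
    intro k hk
    calc ∫ ω, X ω ^ k * d ω ^ (n - k) ∂μ
        ≤ ∫ ω, |X ω ^ k * d ω ^ (n - k)| ∂μ := (le_abs_self _).trans abs_integral_le_integral_abs
      _ = ∫ ω, ‖X ω‖ ^ k * ‖d ω‖ ^ (n - k) ∂μ := by
        simp only [abs_mul, abs_pow, Real.norm_eq_abs]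
      _ ≤ a ^ k * b ^ (n - k) := integral_norm_pow_mul_norm_pow_le hn (by simp at hk; omega) hX hd
  have hexpand : ∫ ω, (X ω + d ω) ^ n ∂μ =
      ∑ k ∈ range (n + 1), (∫ ω, X ω ^ k * d ω ^ (n - k) ∂μ) * (n.choose k) := by
    simp_rw [add_pow]
    rw [integral_finsetSum _ fun k hk => (hcross k hk).mul_const _]
    simp only [integral_mul_const]
  have hlast : n - 1 ∈ range (n + 1) := by simp
  have hn1 : n - (n - 1) = 1 := by omega
  have hbinom := add_pow a b n
  rw [← add_sum_erase _ _ hlast, hn1, pow_one, Nat.choose_symm (by omega),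
    Nat.choose_one_right] at hbinom
  rw [hexpand, ← add_sum_erase _ _ hlast]
  simp only [hn1, pow_one, horth, zero_mul, zero_add]
  have hrest := sum_le_sum (s := (range (n + 1)).erase (n - 1)) fun k hk =>
    mul_le_mul_of_nonneg_right (hmoment k (mem_of_mem_erase hk)) (Nat.cast_nonneg (n.choose k))
  linarith

theorem toReal_eLpNorm_add_sq_le_of_condExp_eq_zero [IsFiniteMeasure μ] {𝓖 : MeasurableSpace Ω}
    (h𝓖 : 𝓖 ≤ m0) {m : ℕ} (hm : m ≠ 0) {X d : Ω → ℝ} (hXm : StronglyMeasurable[𝓖] X)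
    (hX : MemLp X (2 * m : ℕ) μ) (hd : MemLp d (2 * m : ℕ) μ) (hcond : μ[d|𝓖] =ᵐ[μ] 0) :
    (eLpNorm (X + d) (2 * m : ℕ) μ).toReal ^ 2 ≤ (eLpNorm X (2 * m : ℕ) μ).toReal ^ 2 +
      (2 * m - 1) ^ 2 * (eLpNorm d (2 * m : ℕ) μ).toReal ^ 2 := by
  have hn : 2 * m ≠ 0 := by omega
  have horth : ∫ ω, X ω ^ (2 * m - 1) * d ω ∂μ = 0 :=
    integral_mul_eq_zero_of_condExp_eq_zero h𝓖 (hXm.pow _)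
      (by simpa using hX.integrable_pow_mul_pow hn (k := 2 * m - 1) (l := 1) (by omega) hd)
      (hd.integrable (by norm_cast; omega)) hcond
  have hbound := integral_add_pow_le_of_orthogonal hn hX hd horth
  rw [show ((2 * m : ℕ) : ℝ) = 2 * m by push_cast; ring] at hbound
  refine (pow_le_pow_iff_left₀ (by positivity) (by positivity) hm).1 ?_
  rw [← (hX.add hd).integral_pow_two_mul_eq hm]
  simp only [Pi.add_apply]
  linarith [add_pow_two_mul_le m (a := (eLpNorm X (2 * m : ℕ) μ).toReal)
    (b := (eLpNorm d (2 * m : ℕ) μ).toReal) ENNReal.toReal_nonneg ENNReal.toReal_nonneg]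

theorem toReal_eLpNorm_sum_sq_le [IsFiniteMeasure μ] (𝓕 : Filtration ℤ m0) {Δ : ℤ → Ω → ℝ}
    {m : ℕ} (hm : m ≠ 0) (hadapted : ∀ i, StronglyMeasurable[𝓕 i] (Δ i))
    (hmds : ∀ i, μ[Δ i | 𝓕 (i - 1)] =ᵐ[μ] 0) (hΔ : ∀ i, MemLp (Δ i) (2 * m : ℕ) μ)
    (s : Finset ℤ) :
    (eLpNorm (∑ i ∈ s, Δ i) (2 * m : ℕ) μ).toReal ^ 2 ≤
      (2 * m - 1) ^ 2 * ∑ i ∈ s, (eLpNorm (Δ i) (2 * m : ℕ) μ).toReal ^ 2 := by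
  induction s using Finset.induction_on_max with
  | empty => simp
  | insert j s hj ih =>
    have hjs : j ∉ s := fun h => lt_irrefl j (hj j h)
    have hS : StronglyMeasurable[𝓕 (j - 1)] (∑ i ∈ s, Δ i) :=
      Finset.stronglyMeasurable_sum _ fun i hi =>
        (hadapted i).mono (𝓕.mono (by linarith [hj i hi]))
    have hstep := toReal_eLpNorm_add_sq_le_of_condExp_eq_zero (𝓕.le _) hm hS
      (memLp_finsetSum' s fun i _ => hΔ i) (hΔ j) (hmds j)
    rw [sum_insert hjs, sum_insert hjs, add_comm (Δ j), mul_add]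
    linarith

end MeasureTheory

theorem moment_bound_via_burkholder_general {Ω : Type*} {m0 : MeasurableSpace Ω}
    (μ : Measure Ω) [IsProbabilityMeasure μ]
    (𝓕 : Filtration ℤ m0) (Δ : ℤ → Ω → ℝ) (s : Finset ℤ)
    (p : ℕ) (hp : 1 ≤ p) (f : Ω → ℝ)
    (hadapted : ∀ i, StronglyMeasurable[𝓕 i] (Δ i))
    (hmds : ∀ i, μ[Δ i | 𝓕 (i - 1)] =ᵐ[μ] 0)
    (hsum : ∀ ω, f ω - ∫ x, f x ∂μ = ∑ i ∈ s, Δ i ω)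
    (Ψ : ℤ → Ω → ℝ)
    (c : ℤ → ℝ) (hcnn : ∀ i, 0 ≤ c i) (hc : Summable c)
    (hdom : ∀ i, ∀ᵐ ω ∂μ, (Δ i ω) ^ 2 ≤ (Ψ i ω) ^ 2 * c i)
    (hident : ∀ i, ProbabilityTheory.IdentDistrib (Ψ i) (Ψ 0) μ μ)
    (hΨint : Integrable (fun ω => (Ψ 0 ω) ^ (2 * p)) μ) :
    (∫ ω, (f ω - ∫ x, f x ∂μ) ^ (2 * p) ∂μ) ≤
      ((2 * p : ℝ) - 1) ^ (2 * p) * (∫ ω, (Ψ 0 ω) ^ (2 * p) ∂μ) * (∑' i, c i) ^ p := by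
  have hp0 : p ≠ 0 := by omega
  set N : (Ω → ℝ) → ℝ := fun X => (eLpNorm X (2 * p : ℕ) μ).toReal
  have hΨ : ∀ i, MemLp (Ψ i) (2 * p : ℕ) μ := fun i => (hident i).memLp_iff.2 <|
    memLp_of_integrable_norm_pow (by omega) (hident 0).aemeasurable_fst.aestronglyMeasurable
      (by simpa [Real.norm_eq_abs, (even_two_mul p).pow_abs] using hΨint)
  have hΔ : ∀ i, MemLp (Δ i) (2 * p : ℕ) μ := fun i =>
    (hΨ i).of_le_mul ((hadapted i).mono (𝓕.le i)).aestronglyMeasurable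
      (ae_norm_le_sqrt_mul_norm_of_sq_le (hcnn i) (hdom i))
  have hΔnorm : ∀ i, N (Δ i) ^ 2 ≤ N (Ψ 0) ^ 2 * c i := fun i => by
    simpa only [N, (hident i).eLpNorm_eq] using
      toReal_eLpNorm_sq_le_mul_of_sq_le (hcnn i) (hΨ i) (hdom i)
  calc ∫ ω, (f ω - ∫ x, f x ∂μ) ^ (2 * p) ∂μ = (N (∑ i ∈ s, Δ i) ^ 2) ^ p := by
        simp_rw [hsum, ← Finset.sum_apply]
        exact (memLp_finsetSum' s fun i _ => hΔ i).integral_pow_two_mul_eq hp0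
    _ ≤ ((2 * p - 1) ^ 2 * ∑ i ∈ s, N (Ψ 0) ^ 2 * c i) ^ p := by
        gcongr
        exact (toReal_eLpNorm_sum_sq_le 𝓕 hp0 hadapted hmds hΔ s).trans
          (by gcongr with i; exact hΔnorm i)
    _ ≤ ((2 * p - 1) ^ 2 * (N (Ψ 0) ^ 2 * ∑' i, c i)) ^ p := by
        rw [← mul_sum]
        gcongr
        · exact mul_nonneg (sq_nonneg _) (mul_nonneg (sq_nonneg _) (sum_nonneg fun i _ => hcnn i))
        · exact hc.sum_le_tsum s fun i _ => hcnn i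
    _ = _ := by rw [(hΨ 0).integral_pow_two_mul_eq hp0, mul_pow, mul_pow, ← pow_mul]; ring

/-- Burkholder + Hölder moment bound: if `f - E f = ∑_i Δ_i` for a finite martingale
difference sequence with `Δ_i² ≤ Ψ_i² c_i` a.s., the `Ψ_i` identically distributed with
`E[Ψ₀^(2p)] < ∞`, and `(c_i)` nonnegative summable, then
`E[(f - E f)^(2p)] ≤ (2p-1)^(2p) E[Ψ₀^(2p)] (∑_i c_i)^p`. -/
theorem moment_bound_via_burkholder {Ω : Type*} {m0 : MeasurableSpace Ω}
    (μ : Measure Ω) [IsProbabilityMeasure μ]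
    (𝓕 : Filtration ℤ m0) (Δ : ℤ → Ω → ℝ) (s : Finset ℤ)
    (p : ℕ) (hp : 1 ≤ p) (f : Ω → ℝ) (hf : MemLp f (2 * p) μ)
    (hadapted : ∀ i, StronglyMeasurable[𝓕 i] (Δ i))
    (hmds : ∀ i, μ[Δ i | 𝓕 (i - 1)] =ᵐ[μ] 0)
    (hsupp : ∀ i ∉ s, Δ i = 0)
    (hsum : ∀ ω, f ω - ∫ x, f x ∂μ = ∑ i ∈ s, Δ i ω)
    (Ψ : ℤ → Ω → ℝ) (hΨnn : ∀ i ω, 0 ≤ Ψ i ω)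
    (hΨmeas : ∀ i, Measurable (Ψ i))
    (c : ℤ → ℝ) (hcnn : ∀ i, 0 ≤ c i) (hc : Summable c)
    (hdom : ∀ i, ∀ᵐ ω ∂μ, (Δ i ω) ^ 2 ≤ (Ψ i ω) ^ 2 * c i)
    (hident : ∀ i, ProbabilityTheory.IdentDistrib (Ψ i) (Ψ 0) μ μ)
    (hΨint : Integrable (fun ω => (Ψ 0 ω) ^ (2 * p)) μ) :
    (∫ ω, (f ω - ∫ x, f x ∂μ) ^ (2 * p) ∂μ) ≤
      ((2 * p : ℝ) - 1) ^ (2 * p) * (∫ ω, (Ψ 0 ω) ^ (2 * p) ∂μ) * (∑' i, c i) ^ p :=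
  moment_bound_via_burkholder_general μ 𝓕 Δ s p hp f hadapted hmds hsum Ψ c hcnn hc hdom hident
    hΨint
end
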